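/- arXiv:2208.03597 — 2 statements merged into one kernel-verified Lean document; each statement's English description precedes it below -/
import Mathlib

section
/- For any X ⊂ [0,1]^m, any s > 0, and any dyadic δ ∈ (0,1], there exists a covering of X by dyadic cubes C = ⊔_{k=0}^{log₂ δ^{-1}} C_{2^{-k}} (cubes in C_{2^{-k}} of side 2^{-k}) such that Σ_{D ∈ C} r(D)^s = H^s_{δ,∞}(X), and each C_{2^{-k}} satisfies the s-dimensional spacing condition: for l < k every dyadic cube of side 2^{-l} contains at most 2^{(k−l)s} cubes of C_{2^{-k}}. -/
open Metric Set MeasureTheory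
open scoped ENNReal

noncomputable section

/-- The dyadic cube of side `2^{-k}` indexed by `z ∈ ℕ^m`. -/
def dyCube (m k : ℕ) (z : Fin m → ℕ) : Set (Fin m → ℝ) :=
  {x | ∀ i, (z i : ℝ) / 2 ^ k ≤ x i ∧ x i < ((z i : ℝ) + 1) / 2 ^ k}

/-- The `δ`-truncated `s`-dimensional Hausdorff content via coverings by dyadic
cubes of side length `≥ δ`. -/
def dyContent (m : ℕ) (s δ : ℝ) (X : Set (Fin m → ℝ)) : ℝ≥0∞ :=
  ⨅ (𝒞 : (k : ℕ) → Set (Fin m → ℕ))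
    (_ : (∀ k, (𝒞 k).Finite) ∧ (∀ k, 𝒞 k ≠ ∅ → δ ≤ (2:ℝ)⁻¹ ^ k) ∧
          X ⊆ ⋃ k, ⋃ z ∈ 𝒞 k, dyCube m k z),
    ∑' k, ((𝒞 k).ncard : ℝ≥0∞) * (((2:ℝ≥0∞)⁻¹ ^ k) ^ (s : ℝ))

namespace AttainedAux

variable (m K : ℕ)

abbrev T := Fin (K+1) → Finset (Fin m → Fin (2^K+1))

def enc : (Fin m → ℕ) → (Fin m → Fin (2^K+1)) :=
  fun z i => ⟨min (z i) (2^K), by omega⟩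

def dec : (Fin m → Fin (2^K+1)) → (Fin m → ℕ) := fun u i => u i

lemma dec_enc {z : Fin m → ℕ} (hz : ∀ i, z i ≤ 2^K) : dec m K (enc m K z) = z := by
  funext i; simp [dec, enc, Nat.min_eq_left (hz i)]

lemma enc_dec (u : Fin m → Fin (2^K+1)) : enc m K (dec m K u) = u := by
  funext i
  have := (u i).isLt
  simp only [enc, dec]
  ext; simp; omega

lemma dec_inj : Function.Injective (dec m K) := by
  intro u v h
  have : enc m K (dec m K u) = enc m K (dec m K v) := by rw [h]
  rwa [enc_dec, enc_dec] at this

lemma dec_le (u : Fin m → Fin (2^K+1)) (i : Fin m) : dec m K u i ≤ 2^K := by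
  have := (u i).isLt; simp [dec]; omega

def toSets (t : T m K) : ℕ → Set (Fin m → ℕ) :=
  fun k => if h : k < K+1 then dec m K '' (t ⟨k, h⟩ : Set _) else ∅

lemma toSets_finite (t : T m K) (k : ℕ) : (toSets m K t k).Finite := by
  unfold toSets
  split
  · exact ((t _).finite_toSet).image _
  · exact finite_empty

lemma toSets_empty (t : T m K) {k : ℕ} (h : K < k) : toSets m K t k = ∅ := by
  unfold toSets; rw [dif_neg]; omega

lemma ncard_toSets (t : T m K) {k : ℕ} (h : k < K+1) :
    (toSets m K t k).ncard = (t ⟨k, h⟩).card := by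
  unfold toSets
  rw [dif_pos h, Set.ncard_image_of_injective _ (dec_inj m K), Set.ncard_coe_finset]

lemma mem_toSets {t : T m K} {k : ℕ} (h : k < K+1) {z : Fin m → ℕ}
    (hz : ∀ i, z i ≤ 2^K) (he : enc m K z ∈ t ⟨k, h⟩) : z ∈ toSets m K t k := by
  unfold toSets
  rw [dif_pos h]
  exact ⟨enc m K z, he, dec_enc m K hz⟩

lemma of_mem_toSets {t : T m K} {k : ℕ} {z : Fin m → ℕ} (hz : z ∈ toSets m K t k) :
    ∃ h : k < K+1, (∀ i, z i ≤ 2^K) ∧ enc m K z ∈ t ⟨k, h⟩ := by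
  unfold toSets at hz
  split at hz
  · rename_i h
    obtain ⟨u, hu, rfl⟩ := hz
    exact ⟨h, dec_le m K u, by rw [enc_dec]; exact hu⟩
  · exact absurd hz (Set.notMem_empty z)

/-! cube geometry -/

lemma coord_le_of_mem {k : ℕ} {z : Fin m → ℕ} {x : Fin m → ℝ}
    (hx : x ∈ dyCube m k z) (h1 : ∀ i, x i ≤ 1) (i : Fin m) : z i ≤ 2 ^ k := by
  have h := (hx i).1
  have hp : (0:ℝ) < 2 ^ k := by positivity
  have h2 : (z i : ℝ) ≤ (2:ℝ) ^ k := by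
    rw [div_le_iff₀ hp] at h
    nlinarith [h1 i]
  have h3 : (z i : ℝ) ≤ ((2 ^ k : ℕ) : ℝ) := by push_cast; exact h2
  exact_mod_cast h3

lemma corner_mem (k : ℕ) (z : Fin m → ℕ) : (fun i => (z i : ℝ) / 2 ^ k) ∈ dyCube m k z := by
  intro i
  refine ⟨le_refl _, ?_⟩
  have hp : (0:ℝ) < 2 ^ k := by positivity
  apply div_lt_div_of_pos_right ?_ hp
  linarith

lemma subset_coord_le {k l : ℕ} (hlk : l ≤ k) {z w : Fin m → ℕ}
    (hsub : dyCube m k z ⊆ dyCube m l w) (hz : ∀ i, z i ≤ 2 ^ K) (i : Fin m) :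
    w i ≤ 2 ^ K := by
  have hmem := hsub (corner_mem m k z) i
  have h1 : (w i : ℝ) / 2 ^ l ≤ (z i : ℝ) / 2 ^ k := hmem.1
  have h2 : (z i : ℝ) / 2 ^ k ≤ (z i : ℝ) / 2 ^ l := by
    apply div_le_div_of_nonneg_left (by positivity) (by positivity)
    exact pow_le_pow_right₀ (by norm_num) hlk
  have h3 : (w i : ℝ) ≤ (z i : ℝ) := by
    have hp : (0:ℝ) < 2 ^ l := by positivity
    have := h1.trans h2
    rwa [div_le_div_iff_of_pos_right hp] at this
  have : w i ≤ z i := by exact_mod_cast h3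
  exact this.trans (hz i)

lemma init_cover {x : Fin m → ℝ} (hx : ∀ i, x i ∈ Icc (0:ℝ) 1) :
    x ∈ dyCube m 0 (fun i => if x i < 1 then 0 else 1) := by
  intro i
  obtain ⟨h0, h1⟩ := hx i
  by_cases h : x i < 1 <;> simp only [h, if_true, if_false] <;> push_cast <;>
    norm_num <;> constructor <;> linarith

lemma pow_inv_le_iff {k : ℕ} : (2:ℝ)⁻¹ ^ K ≤ 2⁻¹ ^ k ↔ k ≤ K := by
  rw [inv_pow, inv_pow, inv_le_inv₀ (by positivity) (by positivity),
    pow_le_pow_iff_right₀ (by norm_num : (1:ℝ) < 2)]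

/-! values -/

variable (s : ℝ)

def valR (t : T m K) : ℝ := ∑ j : Fin (K+1), ((t j).card : ℝ) * ((2:ℝ)⁻¹ ^ (j:ℕ)) ^ s

def val (t : T m K) : ℝ≥0∞ :=
  ∑ j : Fin (K+1), ((t j).card : ℝ≥0∞) * (((2:ℝ≥0∞)⁻¹ ^ (j:ℕ)) ^ s)

lemma costR_pos (j : ℕ) : 0 < ((2:ℝ)⁻¹ ^ j) ^ s := by positivity

lemma cost_eq (k : ℕ) : ((2:ℝ≥0∞)⁻¹ ^ k) ^ s = ENNReal.ofReal (((2:ℝ)⁻¹ ^ k) ^ s) := by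
  have h2 : (2:ℝ≥0∞)⁻¹ = ENNReal.ofReal (2:ℝ)⁻¹ := by
    rw [ENNReal.ofReal_inv_of_pos two_pos, ENNReal.ofReal_ofNat]
  rw [h2, ← ENNReal.ofReal_pow (by norm_num : (0:ℝ) ≤ 2⁻¹),
    ENNReal.ofReal_rpow_of_pos (by positivity)]

lemma val_eq_ofReal (t : T m K) : val m K s t = ENNReal.ofReal (valR m K s t) := by
  unfold val valR
  rw [ENNReal.ofReal_sum_of_nonneg (fun j _ => by positivity)]
  refine Finset.sum_congr rfl fun j _ => ?_
  rw [cost_eq, ENNReal.ofReal_mul (by positivity), ENNReal.ofReal_natCast]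

lemma tsum_toSets (t : T m K) :
    ∑' k, ((toSets m K t k).ncard : ℝ≥0∞) * (((2:ℝ≥0∞)⁻¹ ^ k) ^ s) = val m K s t := by
  rw [tsum_eq_sum (s := Finset.range (K+1))
    (fun k hk => by
      rw [toSets_empty m K t (by simpa using hk), Set.ncard_empty, Nat.cast_zero, zero_mul])]
  rw [← Fin.sum_univ_eq_sum_range (fun k => ((toSets m K t k).ncard : ℝ≥0∞) * (((2:ℝ≥0∞)⁻¹ ^ k) ^ s))]
  exact Finset.sum_congr rfl fun j _ => by rw [ncard_toSets m K t j.isLt]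

/-- cost comparison for the spacing exchange -/
lemma cost_lt {k l n : ℕ} (h : (2:ℝ) ^ (((k:ℝ) - l) * s) < n) :
    ((2:ℝ)⁻¹ ^ l) ^ s < (n:ℝ) * ((2:ℝ)⁻¹ ^ k) ^ s := by
  have e : ∀ j : ℕ, ((2:ℝ)⁻¹ ^ j) ^ s = (2:ℝ) ^ (-(j:ℝ) * s) := by
    intro j
    rw [← Real.rpow_natCast (2:ℝ)⁻¹ j, ← Real.rpow_mul (by norm_num),
      Real.inv_rpow (by norm_num), ← Real.rpow_neg (by norm_num)]
    rw [neg_mul]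
  rw [e, e]
  have hp : (0:ℝ) < 2 ^ (-(k:ℝ) * s) := Real.rpow_pos_of_pos two_pos _
  calc (2:ℝ) ^ (-(l:ℝ) * s) = 2 ^ (((k:ℝ) - l) * s) * 2 ^ (-(k:ℝ) * s) := by
        rw [← Real.rpow_add two_pos]; ring_nf
    _ < (n:ℝ) * 2 ^ (-(k:ℝ) * s) := mul_lt_mul_of_pos_right h hp
end AttainedAux

open AttainedAux in
/-- for any `X ⊆ [0,1]^m`, `s > 0` and dyadic `δ = 2^{-K}`,
there is a covering of `X` by dyadic cubes of side lengths `2^{-k}`, `0 ≤ k ≤ K`,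
whose total `s`-content equals `H^s_{δ,∞}(X)` and whose scale-`2^{-k}` pieces
satisfy the `s`-dimensional spacing condition. -/
theorem attained_dyadic_covering (m : ℕ) (s : ℝ) (hs : 0 < s) (K : ℕ)
    (X : Set (Fin m → ℝ)) (hX : X ⊆ {x | ∀ i, x i ∈ Icc (0:ℝ) 1}) :
    ∃ 𝒞 : ℕ → Set (Fin m → ℕ),
      (∀ k, (𝒞 k).Finite) ∧ (∀ k, K < k → 𝒞 k = ∅) ∧
      (X ⊆ ⋃ k, ⋃ z ∈ 𝒞 k, dyCube m k z) ∧
      (∑' k, ((𝒞 k).ncard : ℝ≥0∞) * (((2:ℝ≥0∞)⁻¹ ^ k) ^ (s : ℝ))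
          = dyContent m s ((2:ℝ)⁻¹ ^ K) X) ∧
      (∀ k l : ℕ, l < k → ∀ w : Fin m → ℕ,
        (({z ∈ 𝒞 k | dyCube m k z ⊆ dyCube m l w}.ncard : ℝ)) ≤ (2:ℝ) ^ (((k:ℝ) - l) * s)) := by
  classical
  set A : Set (T m K) := {t | X ⊆ ⋃ k, ⋃ z ∈ toSets m K t k, dyCube m k z} with hA
  have hX1 : ∀ x ∈ X, ∀ i, x i ≤ 1 := fun x hx i => (hX hx i).2
  have hAne : A.Nonempty := by
    refine ⟨fun _ => Finset.univ, ?_⟩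
    intro x hx
    have hz : ∀ i, (if x i < 1 then 0 else 1) ≤ 2^K := fun i => by
      split <;> simp [Nat.one_le_two_pow]
    refine Set.mem_iUnion.mpr ⟨0, Set.mem_iUnion₂.mpr ⟨_, ?_, init_cover m (hX hx)⟩⟩
    exact mem_toSets m K (Nat.succ_pos K) hz (Finset.mem_univ _)
  have hAfin : A.Finite := Set.toFinite A
  obtain ⟨t₀, ht₀A, ht₀min⟩ : ∃ t₀ ∈ A, ∀ t ∈ A, valR m K s t₀ ≤ valR m K s t := by
    obtain ⟨t₀, h1, h2⟩ := Finset.exists_min_image hAfin.toFinset (valR m K s)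
      (hAfin.toFinset_nonempty.mpr hAne)
    exact ⟨t₀, hAfin.mem_toFinset.mp h1, fun t ht => h2 t (hAfin.mem_toFinset.mpr ht)⟩
  refine ⟨toSets m K t₀, fun k => toSets_finite m K t₀ k, fun k hk => toSets_empty m K t₀ hk,
    ht₀A, ?_, ?_⟩
  · -- content equality
    rw [tsum_toSets m K s t₀]
    refine le_antisymm ?_ ?_
    · -- val t₀ ≤ dyContent
      refine le_iInf fun 𝒞' => le_iInf fun h𝒞' => ?_
      obtain ⟨hfin, hδ, hcov⟩ := h𝒞'
      have hSfin : ∀ k, ({z ∈ 𝒞' k | (X ∩ dyCube m k z).Nonempty} : Set _).Finite :=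
        fun k => (hfin k).subset (Set.sep_subset _ _)
      set t' : T m K := fun j => ((hSfin j.1).toFinset).image (enc m K) with ht'
      have ht'A : t' ∈ A := by
        intro x hx
        obtain ⟨k, hk⟩ := Set.mem_iUnion.mp (hcov hx)
        obtain ⟨z, hz, hxz⟩ := Set.mem_iUnion₂.mp hk
        have hkK : k ≤ K := (pow_inv_le_iff K).mp
          (hδ k (Set.nonempty_iff_ne_empty.mp ⟨z, hz⟩))
        have hzle : ∀ i, z i ≤ 2^K := fun i =>
          (coord_le_of_mem m hxz (hX1 x hx) i).trans (Nat.pow_le_pow_right (by norm_num) hkK)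
        refine Set.mem_iUnion.mpr ⟨k, Set.mem_iUnion₂.mpr ⟨z, ?_, hxz⟩⟩
        exact mem_toSets m K (by omega) hzle
          (Finset.mem_image_of_mem _ ((hSfin k).mem_toFinset.mpr ⟨hz, ⟨x, hx, hxz⟩⟩))
      have hval : val m K s t' ≤
          ∑' k, ((𝒞' k).ncard : ℝ≥0∞) * (((2:ℝ≥0∞)⁻¹ ^ k) ^ (s:ℝ)) := by
        calc val m K s t'
            ≤ ∑ j : Fin (K+1), ((𝒞' j.1).ncard : ℝ≥0∞) * (((2:ℝ≥0∞)⁻¹ ^ (j:ℕ)) ^ s) := by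
              refine Finset.sum_le_sum fun j _ => mul_le_mul_left ?_ _
              have h1 : (t' j).card ≤ ({z ∈ 𝒞' j.1 | (X ∩ dyCube m j.1 z).Nonempty} : Set _).ncard := by
                rw [Set.ncard_eq_toFinset_card _ (hSfin j.1)]
                exact Finset.card_image_le
              have h2 : ({z ∈ 𝒞' j.1 | (X ∩ dyCube m j.1 z).Nonempty} : Set _).ncard
                  ≤ (𝒞' j.1).ncard := Set.ncard_le_ncard (Set.sep_subset _ _) (hfin j.1)
              exact_mod_cast h1.trans h2
          _ = ∑ k ∈ Finset.range (K+1), ((𝒞' k).ncard : ℝ≥0∞) * (((2:ℝ≥0∞)⁻¹ ^ k) ^ s) :=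
              Fin.sum_univ_eq_sum_range
                (fun k => ((𝒞' k).ncard : ℝ≥0∞) * (((2:ℝ≥0∞)⁻¹ ^ k) ^ s)) (K+1)
          _ ≤ _ := ENNReal.sum_le_tsum _
      calc val m K s t₀ ≤ val m K s t' := by
            rw [val_eq_ofReal, val_eq_ofReal]
            exact ENNReal.ofReal_le_ofReal (ht₀min t' ht'A)
        _ ≤ _ := hval
    · -- dyContent ≤ val t₀
      have hprop : (∀ k, (toSets m K t₀ k).Finite) ∧
          (∀ k, toSets m K t₀ k ≠ ∅ → (2:ℝ)⁻¹ ^ K ≤ (2:ℝ)⁻¹ ^ k) ∧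
          X ⊆ ⋃ k, ⋃ z ∈ toSets m K t₀ k, dyCube m k z := by
        refine ⟨fun k => toSets_finite m K t₀ k, fun k hk => ?_, ht₀A⟩
        rcases le_or_gt k K with h | h
        · exact (pow_inv_le_iff K).mpr h
        · exact absurd (toSets_empty m K t₀ h) hk
      calc dyContent m s ((2:ℝ)⁻¹ ^ K) X
          ≤ ∑' k, ((toSets m K t₀ k).ncard : ℝ≥0∞) * (((2:ℝ≥0∞)⁻¹ ^ k) ^ (s:ℝ)) :=
            iInf_le_of_le (toSets m K t₀) (iInf_le_of_le hprop le_rfl)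
        _ = val m K s t₀ := tsum_toSets m K s t₀
  · -- spacing
    intro k l hlk w
    by_cases hkK : k ≤ K
    swap
    · rw [toSets_empty m K t₀ (by omega)]
      have : ({z ∈ (∅ : Set (Fin m → ℕ)) | dyCube m k z ⊆ dyCube m l w}) = ∅ := by
        ext z; simp
      rw [this, Set.ncard_empty]
      simp only [Nat.cast_zero]
      positivity
    by_contra hcon
    push_neg at hcon
    set B : Set (Fin m → ℕ) := {z ∈ toSets m K t₀ k | dyCube m k z ⊆ dyCube m l w} with hB
    have hBsubset : B ⊆ toSets m K t₀ k := Set.sep_subset _ _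
    have hBfin : B.Finite := (toSets_finite m K t₀ k).subset hBsubset
    set n := B.ncard with hn
    have hnR : (2:ℝ) ^ (((k:ℝ) - l) * s) < n := hcon
    have hnpos : 0 < n := by
      by_contra h0
      push_neg at h0
      have h0' : n = 0 := by omega
      rw [h0'] at hnR
      have := Real.rpow_pos_of_pos (two_pos (α := ℝ)) (((k:ℝ) - l) * s)
      norm_num at hnR
      linarith
    obtain ⟨z₀, hz₀⟩ : B.Nonempty := Set.nonempty_of_ncard_ne_zero (by omega)
    have hz₀K : ∀ i, z₀ i ≤ 2^K := (of_mem_toSets m K (hBsubset hz₀)).2.1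
    have hwK : ∀ i, w i ≤ 2^K := subset_coord_le m K hlk.le hz₀.2 hz₀K
    have hk' : k < K+1 := by omega
    have hl' : l < K+1 := by omega
    set a : Fin (K+1) := ⟨k, hk'⟩ with ha
    set b : Fin (K+1) := ⟨l, hl'⟩ with hb
    have hab : b ≠ a := by
      intro h
      have := congrArg Fin.val h
      simp [ha, hb] at this
      omega
    set Bf : Finset (Fin m → Fin (2^K+1)) := hBfin.toFinset.image (enc m K) with hBf
    have hencinj : Set.InjOn (enc m K) ↑hBfin.toFinset := by
      intro z hz z' hz' he
      rw [Set.Finite.coe_toFinset] at hz hz'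
      have h1 := dec_enc m K (of_mem_toSets m K (hBsubset hz)).2.1
      have h2 := dec_enc m K (of_mem_toSets m K (hBsubset hz')).2.1
      rw [← h1, ← h2, he]
    have hBfcard : Bf.card = n := by
      rw [hBf, Finset.card_image_of_injOn hencinj, ← Set.ncard_eq_toFinset_card _ hBfin]
    have hBfsub : Bf ⊆ t₀ a := by
      intro u hu
      rw [hBf, Finset.mem_image] at hu
      obtain ⟨z, hzB, rfl⟩ := hu
      rw [Set.Finite.mem_toFinset] at hzB
      obtain ⟨h', hle, henc⟩ := of_mem_toSets m K (hBsubset hzB)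
      exact henc
    set t₁ : T m K := fun j => if j = a then t₀ j \ Bf
      else if j = b then insert (enc m K w) (t₀ j) else t₀ j with ht₁
    have ht₁a : t₁ a = t₀ a \ Bf := by rw [ht₁]; simp
    have ht₁b : t₁ b = insert (enc m K w) (t₀ b) := by rw [ht₁]; simp [hab]
    have ht₁other : ∀ j, j ≠ a → j ≠ b → t₁ j = t₀ j := by
      intro j h1 h2; rw [ht₁]; simp [h1, h2]
    have ht₁A : t₁ ∈ A := by
      intro x hx
      obtain ⟨k', hk'mem⟩ := Set.mem_iUnion.mp (ht₀A hx)
      obtain ⟨z, hzmem, hxz⟩ := Set.mem_iUnion₂.mp hk'mem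
      by_cases hcase : k' = k ∧ z ∈ B
      · refine Set.mem_iUnion.mpr ⟨l, Set.mem_iUnion₂.mpr ⟨w, ?_, ?_⟩⟩
        · refine mem_toSets m K hl' hwK ?_
          rw [show (⟨l, hl'⟩ : Fin (K+1)) = b from rfl, ht₁b]
          exact Finset.mem_insert_self _ _
        · exact hcase.2.2 (hcase.1 ▸ hxz)
      · refine Set.mem_iUnion.mpr ⟨k', Set.mem_iUnion₂.mpr ⟨z, ?_, hxz⟩⟩
        obtain ⟨h', hle, henc⟩ := of_mem_toSets m K hzmem
        refine mem_toSets m K h' hle ?_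
        by_cases hja : (⟨k', h'⟩ : Fin (K+1)) = a
        · have hk'k : k' = k := congrArg Fin.val hja
          rw [hja, ht₁a, Finset.mem_sdiff]
          refine ⟨hja ▸ henc, fun hmem => ?_⟩
          rw [hBf, Finset.mem_image] at hmem
          obtain ⟨z', hz'B, hz'e⟩ := hmem
          rw [Set.Finite.mem_toFinset] at hz'B
          have hzz' : z = z' := by
            have h1 := dec_enc m K hle
            have h2 := dec_enc m K (of_mem_toSets m K (hBsubset hz'B)).2.1
            rw [← h1, ← hz'e, h2]
          exact hcase ⟨hk'k, hzz' ▸ hz'B⟩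
        · by_cases hjb : (⟨k', h'⟩ : Fin (K+1)) = b
          · rw [hjb, ht₁b]
            exact Finset.mem_insert_of_mem (hjb ▸ henc)
          · rw [ht₁other _ hja hjb]
            exact henc
    have hckl := cost_lt s (k := k) (l := l) (n := n) hnR
    have hnle : n ≤ (t₀ a).card := hBfcard ▸ Finset.card_le_card hBfsub
    have split : ∀ t : T m K, valR m K s t =
        ((t a).card : ℝ) * ((2:ℝ)⁻¹ ^ k) ^ s + ((t b).card : ℝ) * ((2:ℝ)⁻¹ ^ l) ^ s +
          ∑ j ∈ (Finset.univ.erase a).erase b, ((t j).card : ℝ) * ((2:ℝ)⁻¹ ^ (j:ℕ)) ^ s := by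
      intro t
      unfold valR
      rw [← Finset.add_sum_erase _ _ (Finset.mem_univ a),
        ← Finset.add_sum_erase _ _ (Finset.mem_erase.mpr ⟨hab, Finset.mem_univ b⟩)]
      ring
    have hR : ∑ j ∈ (Finset.univ.erase a).erase b, ((t₁ j).card : ℝ) * ((2:ℝ)⁻¹ ^ (j:ℕ)) ^ s
        = ∑ j ∈ (Finset.univ.erase a).erase b, ((t₀ j).card : ℝ) * ((2:ℝ)⁻¹ ^ (j:ℕ)) ^ s := by
      refine Finset.sum_congr rfl fun j hj => ?_
      have h1 := Finset.mem_erase.mp hj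
      have h2 := Finset.mem_erase.mp h1.2
      rw [ht₁other j h2.1 h1.1]
    have hcard_a : ((t₁ a).card : ℝ) = ((t₀ a).card : ℝ) - n := by
      rw [ht₁a, Finset.card_sdiff_of_subset hBfsub, hBfcard, Nat.cast_sub hnle]
    have hcard_b : ((t₁ b).card : ℝ) ≤ ((t₀ b).card : ℝ) + 1 := by
      rw [ht₁b]
      have := Finset.card_insert_le (enc m K w) (t₀ b)
      exact_mod_cast this
    have hlt : valR m K s t₁ < valR m K s t₀ := by
      rw [split t₁, split t₀, hR, hcard_a]
      have hck : 0 < ((2:ℝ)⁻¹ ^ k) ^ s := costR_pos s k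
      have hcl : 0 < ((2:ℝ)⁻¹ ^ l) ^ s := costR_pos s l
      nlinarith [mul_le_mul_of_nonneg_right hcard_b hcl.le, hckl]
    exact absurd (ht₀min t₁ ht₁A) (not_le.mpr hlt)
end
end

section
/- Let δ, s > 0 and X ⊂ [0,1]^m with H^s_{δ,∞}(X) = κ > 0. Then there exists a (δ,s)-subset P ⊂ X with cardinality #P ≳ κ δ^{-s}. -/
/-!
Fix the dyadic scale `2^{-N} ∈ [δ, 2δ)` and let `D` be the level-`N` cubes meeting `X`.
Take a largest `S ⊆ D` satisfying the dyadic Frostman condition: each level-`k` cube, `k ≤ N`,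
contains at most `2^{(N-k)s}` cubes of `S`. By maximality every cube of `D` lies in a level-`k`
cube holding at least half that many cubes of `S`; the coarsest such cubes cover `X`, are
disjoint, and each has weight `2^{-ks} ≤ 2 · 2^{-Ns} · #(its cubes of S)`, so
`κ ≤ 2 · 2^{-Ns} · #S`. Keeping the cubes of `S` in the most popular parity class (a loss of
`2^m`) and one point of `X` in each gives a `δ`-separated set. For `δ ≤ r ≤ 1` pick `k` with
`r ≤ 2^{-k} < 2r`: a ball of radius `r` meets at most `3^m` level-`k` cubes, each containing at
most `2^{(N-k)s} ≤ (2r/δ)^s` of the points.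
-/

open Metric Set MeasureTheory
open scoped ENNReal

noncomputable section

/-- `F` is a `(δ,s)`-set with counting constant `C`. -/
def IsDeltaSet {α : Type*} [PseudoMetricSpace α] (δ s C : ℝ) (F : Finset α) : Prop :=
  (∀ x ∈ F, ∀ y ∈ F, x ≠ y → δ ≤ dist x y) ∧
  ∀ (x : α) (r : ℝ), δ ≤ r → r ≤ 1 →
    (((F : Set α) ∩ closedBall x r).ncard : ℝ) ≤ C * (r / δ) ^ s


section

open scoped Finset

variable {m : ℕ}

def dyAnc (d : ℕ) (z : Fin m → ℕ) : Fin m → ℕ := fun i => z i / 2 ^ d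

lemma dyAnc_dyAnc (a b : ℕ) (z : Fin m → ℕ) : dyAnc a (dyAnc b z) = dyAnc (b + a) z := by
  funext i
  simp only [dyAnc, Nat.div_div_eq_div_mul, pow_add]

lemma mem_dyCube_iff {k : ℕ} {z : Fin m → ℕ} {x : Fin m → ℝ} :
    x ∈ dyCube m k z ↔ ∀ i, 0 ≤ x i ∧ ⌊x i * 2 ^ k⌋₊ = z i := by
  refine forall_congr' fun i => ?_
  have h2k : (0 : ℝ) < 2 ^ k := by positivity
  constructor
  · rintro ⟨hlow, hupp⟩
    have h0 : 0 ≤ x i := le_trans (by positivity) hlow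
    exact ⟨h0, (Nat.floor_eq_iff (by positivity)).2
      ⟨(div_le_iff₀ h2k).1 hlow, (lt_div_iff₀ h2k).1 hupp⟩⟩
  · rintro ⟨h0, hfloor⟩
    rw [Nat.floor_eq_iff (by positivity)] at hfloor
    exact ⟨(div_le_iff₀ h2k).2 hfloor.1, (lt_div_iff₀ h2k).2 hfloor.2⟩

lemma eq_of_mem_dyCube {k : ℕ} {z z' : Fin m → ℕ} {x : Fin m → ℝ}
    (hz : x ∈ dyCube m k z) (hz' : x ∈ dyCube m k z') : z = z' := by
  rw [mem_dyCube_iff] at hz hz'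
  funext i
  rw [← (hz i).2, (hz' i).2]

lemma dyCube_subset_dyCube_dyAnc {k N : ℕ} (hk : k ≤ N) (z : Fin m → ℕ) :
    dyCube m N z ⊆ dyCube m k (dyAnc (N - k) z) := by
  intro x hx
  rw [mem_dyCube_iff] at hx ⊢
  refine fun i => ⟨(hx i).1, ?_⟩
  rw [dyAnc, ← (hx i).2, ← Nat.floor_div_natCast]
  congr 1
  rw [← Nat.add_sub_of_le hk, Nat.add_sub_cancel_left, pow_add]
  push_cast
  field_simp

lemma natCast_sub_sub_one_lt_of_mem_dyCube {k : ℕ} {z z' : Fin m → ℕ} {x y : Fin m → ℝ}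
    (hx : x ∈ dyCube m k z) (hy : y ∈ dyCube m k z') (i : Fin m) :
    (z i : ℝ) - z' i - 1 < 2 ^ k * dist x y := by
  have h2k : (0 : ℝ) < 2 ^ k := by positivity
  have hxy : x i - y i ≤ dist x y :=
    (le_abs_self _).trans ((Real.dist_eq _ _).symm.le.trans (dist_le_pi_dist x y i))
  have hlow := (div_le_iff₀ h2k).1 (hx i).1
  have hupp := (lt_div_iff₀ h2k).1 (hy i).2
  nlinarith

lemma exists_dyCube_cover {X : Set (Fin m → ℝ)}
    (hX : X ⊆ {x | ∀ i, x i ∈ Icc (0 : ℝ) 1}) (N : ℕ) :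
    ∃ D : Finset (Fin m → ℕ), ∃ p : (Fin m → ℕ) → Fin m → ℝ,
      (∀ z ∈ D, p z ∈ X ∩ dyCube m N z) ∧ X ⊆ ⋃ z ∈ D, dyCube m N z := by
  set f : (Fin m → ℝ) → Fin m → ℕ := fun x i => ⌊x i * 2 ^ N⌋₊
  have hf : ∀ x ∈ X, x ∈ dyCube m N (f x) := fun x hx =>
    mem_dyCube_iff.2 fun i => ⟨(hX hx i).1, rfl⟩
  have hfin : (f '' X).Finite := by
    refine (Set.Finite.pi (t := fun _ => Iic (2 ^ N)) fun _ => finite_Iic _).subset ?_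
    rintro _ ⟨x, hx, rfl⟩ i -
    refine Nat.floor_le_of_le ?_
    push_cast
    nlinarith [(hX hx i).2, pow_pos (two_pos (α := ℝ)) N]
  refine ⟨hfin.toFinset, Function.invFunOn f X, fun z hz => ?_, fun x hx => ?_⟩
  · rw [Set.Finite.mem_toFinset] at hz
    have hmem := Function.invFunOn_mem hz
    refine ⟨hmem, ?_⟩
    simpa [Function.invFunOn_eq hz] using hf _ hmem
  · exact mem_biUnion (hfin.mem_toFinset.2 (mem_image_of_mem f hx)) (hf x hx)

lemma exists_le_inv_two_pow_lt {r : ℝ} (hr : 0 < r) (hr1 : r ≤ 1) :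
    ∃ k : ℕ, r ≤ 2⁻¹ ^ k ∧ 2⁻¹ ^ k < 2 * r := by
  obtain ⟨k, hk, hk'⟩ :=
    exists_nat_pow_near ((one_le_inv₀ hr).2 hr1) (one_lt_two (α := ℝ))
  have h2k : (0 : ℝ) < 2 ^ k := by positivity
  refine ⟨k, ?_⟩
  rw [inv_pow]
  refine ⟨(le_inv_comm₀ h2k hr).1 hk, ?_⟩
  rw [inv_lt_iff_one_lt_mul₀ h2k]
  rw [inv_lt_iff_one_lt_mul₀ hr, pow_succ] at hk'
  linarith

lemma two_pow_sub_mul_inv_two_pow {k N : ℕ} (hk : k ≤ N) :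
    (2 : ℝ) ^ (N - k) * 2⁻¹ ^ N = 2⁻¹ ^ k := by
  rw [← Nat.sub_add_cancel hk, pow_add, Nat.add_sub_cancel, inv_pow, inv_pow]
  field_simp

lemma dyContent_empty (s δ : ℝ) : dyContent m s δ ∅ = 0 := by
  refine le_antisymm ((iInf₂_le (fun _ => ∅)
    ⟨fun _ => finite_empty, fun _ h => absurd rfl h, empty_subset _⟩).trans ?_) bot_le
  simp

lemma dyContent_eq_top_of_one_lt {s δ : ℝ} {X : Set (Fin m → ℝ)} (hδ : 1 < δ)
    (hX : X.Nonempty) : dyContent m s δ X = ⊤ := by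
  refine iInf₂_eq_top.2 fun 𝒞 h𝒞 => (hδ.not_ge ?_).elim
  obtain ⟨-, h𝒞, hcov⟩ := h𝒞
  obtain ⟨x, hx⟩ := hX
  obtain ⟨k, w, hw, -⟩ : ∃ k, ∃ w ∈ 𝒞 k, x ∈ dyCube m k w := by simpa using hcov hx
  exact (h𝒞 k (nonempty_of_mem hw).ne_empty).trans (pow_le_one₀ (by norm_num) (by norm_num))

lemma le_one_of_dyContent_ne_zero_ne_top {s δ : ℝ} {X : Set (Fin m → ℝ)}
    (h0 : dyContent m s δ X ≠ 0) (htop : dyContent m s δ X ≠ ⊤) : δ ≤ 1 := by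
  by_contra! hδ
  obtain rfl | hX := X.eq_empty_or_nonempty
  · exact h0 (dyContent_empty s δ)
  · exact htop (dyContent_eq_top_of_one_lt hδ hX)

lemma dyContent_le_of_cover {s δ : ℝ} {X : Set (Fin m → ℝ)} {N : ℕ}
    (𝒞 : ℕ → Finset (Fin m → ℕ)) (hδ : δ ≤ 2⁻¹ ^ N)
    (h𝒞 : ∀ k, N < k → 𝒞 k = ∅)
    (hX : X ⊆ ⋃ k, ⋃ w ∈ 𝒞 k, dyCube m k w) :
    dyContent m s δ X ≤
      ENNReal.ofReal (∑ k ∈ Finset.range (N + 1), #(𝒞 k) * ((2 : ℝ)⁻¹ ^ k) ^ s) := by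
  have hadm : (∀ k, (𝒞 k : Set (Fin m → ℕ)).Finite) ∧
      (∀ k, (𝒞 k : Set (Fin m → ℕ)) ≠ ∅ → δ ≤ (2 : ℝ)⁻¹ ^ k) ∧
      X ⊆ ⋃ k, ⋃ w ∈ (𝒞 k : Set (Fin m → ℕ)), dyCube m k w := by
    refine ⟨fun k => (𝒞 k).finite_toSet, fun k hk => ?_, by simpa using hX⟩
    refine hδ.trans (pow_le_pow_of_le_one (by norm_num) (by norm_num) ?_)
    by_contra! hNk
    exact hk (by simp [h𝒞 k hNk])
  refine (iInf₂_le (fun k => (𝒞 k : Set (Fin m → ℕ))) hadm).trans (le_of_eq ?_)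
  rw [tsum_eq_sum (s := Finset.range (N + 1)) fun k hk => by simp [h𝒞 k (by simpa using hk)],
    ENNReal.ofReal_sum_of_nonneg fun k _ => by positivity]
  refine Finset.sum_congr rfl fun k _ => ?_
  rw [Set.ncard_coe_finset, ENNReal.ofReal_mul (by positivity), ENNReal.ofReal_natCast,
    ← ENNReal.ofReal_rpow_of_pos (by positivity), ENNReal.ofReal_pow (by norm_num),
    ENNReal.ofReal_inv_of_pos two_pos, ENNReal.ofReal_ofNat]

def IsDyadicFrostman (N : ℕ) (s : ℝ) (S : Finset (Fin m → ℕ)) : Prop :=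
  ∀ k ≤ N, ∀ w, (#{z ∈ S | dyAnc (N - k) z = w} : ℝ) ≤ ((2 : ℝ) ^ (N - k)) ^ s

lemma IsDyadicFrostman.mono {N : ℕ} {s : ℝ} {S S' : Finset (Fin m → ℕ)}
    (hS : IsDyadicFrostman N s S) (hS' : S' ⊆ S) : IsDyadicFrostman N s S' :=
  fun k hk w => le_trans (by exact_mod_cast Finset.card_le_card (Finset.filter_subset_filter _ hS'))
    (hS k hk w)

lemma exists_saturated_of_not_isDyadicFrostman_insert {N : ℕ} {s : ℝ} (hs : 0 ≤ s)
    {S : Finset (Fin m → ℕ)} {z : Fin m → ℕ} (hS : IsDyadicFrostman N s S) (hz : z ∉ S)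
    (hzS : ¬ IsDyadicFrostman N s (insert z S)) :
    ∃ k ≤ N,
      ((2 : ℝ) ^ (N - k)) ^ s ≤ 2 * #{z' ∈ S | dyAnc (N - k) z' = dyAnc (N - k) z} := by
  simp only [IsDyadicFrostman, not_forall, not_le] at hzS
  obtain ⟨k, hk, w, hw⟩ := hzS
  obtain rfl : dyAnc (N - k) z = w := by
    by_contra hne
    rw [Finset.filter_insert, if_neg hne] at hw
    exact (hS k hk w).not_gt hw
  rw [Finset.filter_insert, if_pos rfl,
    Finset.card_insert_of_notMem fun h => hz (Finset.mem_filter.1 h).1, Nat.cast_succ] at hw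
  refine ⟨k, hk, ?_⟩
  have hT : 1 ≤ ((2 : ℝ) ^ (N - k)) ^ s := Real.one_le_rpow (one_le_pow₀ one_le_two) hs
  rcases Nat.eq_zero_or_pos #{z' ∈ S | dyAnc (N - k) z' = dyAnc (N - k) z} with h0 | h0
  · rw [h0, Nat.cast_zero] at hw
    linarith
  · have : (1 : ℝ) ≤ #{z' ∈ S | dyAnc (N - k) z' = dyAnc (N - k) z} := by exact_mod_cast h0
    linarith

lemma exists_isDyadicFrostman_saturated (D : Finset (Fin m → ℕ)) (N : ℕ) {s : ℝ}
    (hs : 0 ≤ s) :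
    ∃ S ⊆ D, IsDyadicFrostman N s S ∧ ∀ z ∈ D, ∃ k ≤ N,
      ((2 : ℝ) ^ (N - k)) ^ s ≤ 2 * #{z' ∈ S | dyAnc (N - k) z' = dyAnc (N - k) z} := by
  classical
  obtain ⟨S, hS, hmax⟩ := Finset.exists_max_image {S ∈ D.powerset | IsDyadicFrostman N s S}
    Finset.card ⟨∅, Finset.mem_filter.2
      ⟨Finset.empty_mem_powerset D, fun k _ w => by simp; positivity⟩⟩
  rw [Finset.mem_filter, Finset.mem_powerset] at hS
  refine ⟨S, hS.1, hS.2, fun z hzD => ?_⟩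
  by_cases hz : z ∈ S
  · refine ⟨N, le_rfl, ?_⟩
    rw [Nat.sub_self, pow_zero, Real.one_rpow]
    have hpos : 0 < #{z' ∈ S | dyAnc 0 z' = dyAnc 0 z} :=
      Finset.card_pos.2 ⟨z, Finset.mem_filter.2 ⟨hz, rfl⟩⟩
    have : (1 : ℝ) ≤ #{z' ∈ S | dyAnc 0 z' = dyAnc 0 z} := by exact_mod_cast hpos
    linarith
  · refine exists_saturated_of_not_isDyadicFrostman_insert hs hS.2 hz fun hins => ?_
    have := hmax (insert z S) (by simp [Finset.insert_subset_iff, hzD, hS.1, hins])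
    rw [Finset.card_insert_of_notMem hz] at this
    omega

section StopLevel

variable (N : ℕ) (Q : ℕ → (Fin m → ℕ) → Prop)

/-- The coarsest level `k ≤ N` at which the ancestor of `z` satisfies `Q` (junk value `0` if
there is none). -/
def stopLevel (z : Fin m → ℕ) : ℕ :=
  sInf {k | k ≤ N ∧ Q k (dyAnc (N - k) z)}

def stopCover (D : Finset (Fin m → ℕ)) (k : ℕ) : Finset (Fin m → ℕ) :=
  {z ∈ D | stopLevel N Q z = k}.image (dyAnc (N - k))

variable {N Q} {D : Finset (Fin m → ℕ)}

lemma stopLevel_spec {z : Fin m → ℕ} (h : ∃ k ≤ N, Q k (dyAnc (N - k) z)) :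
    stopLevel N Q z ≤ N ∧ Q (stopLevel N Q z) (dyAnc (N - stopLevel N Q z) z) :=
  Nat.sInf_mem h

lemma stopLevel_eq_of_dyAnc_eq {z z' : Fin m → ℕ} {k : ℕ}
    (h : ∃ k ≤ N, Q k (dyAnc (N - k) z))
    (hk : stopLevel N Q z = k) (hzz' : dyAnc (N - k) z' = dyAnc (N - k) z) :
    stopLevel N Q z' = k := by
  obtain ⟨hkN, hQ⟩ := stopLevel_spec h
  rw [hk] at hkN hQ
  have hanc : ∀ j ≤ k, dyAnc (N - j) z' = dyAnc (N - j) z := fun j hj => by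
    rw [show N - j = N - k + (k - j) by omega, ← dyAnc_dyAnc, ← dyAnc_dyAnc, hzz']
  have hQ' : k ∈ {j | j ≤ N ∧ Q j (dyAnc (N - j) z')} :=
    ⟨hkN, (hanc k le_rfl).symm ▸ hQ⟩
  refine le_antisymm (Nat.sInf_le hQ') (le_of_not_gt fun hlt => ?_)
  obtain ⟨hjN, hQj⟩ := Nat.sInf_mem (nonempty_of_mem hQ')
  exact Nat.notMem_of_lt_sInf (s := {j | j ≤ N ∧ Q j (dyAnc (N - j) z)}) (hlt.trans_eq hk.symm)
    ⟨hjN, hanc _ hlt.le ▸ hQj⟩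

variable (hD : ∀ z ∈ D, ∃ k ≤ N, Q k (dyAnc (N - k) z))
include hD

lemma stopCover_eq_empty {k : ℕ} (hk : N < k) : stopCover N Q D k = ∅ := by
  rw [stopCover, Finset.image_eq_empty, Finset.filter_eq_empty_iff]
  exact fun z hz hzk => (hzk ▸ (stopLevel_spec (hD z hz)).1).not_gt hk

lemma of_mem_stopCover {k : ℕ} {w : Fin m → ℕ} (hw : w ∈ stopCover N Q D k) : Q k w := by
  obtain ⟨z, hz, rfl⟩ := Finset.mem_image.1 hw
  rw [Finset.mem_filter] at hz
  simpa [hz.2] using (stopLevel_spec (hD z hz.1)).2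

lemma iUnion_dyCube_subset_stopCover :
    ⋃ z ∈ D, dyCube m N z ⊆ ⋃ k, ⋃ w ∈ stopCover N Q D k, dyCube m k w := by
  refine iUnion₂_subset fun z hz x hx => mem_iUnion.2 ⟨stopLevel N Q z, ?_⟩
  exact mem_biUnion (Finset.mem_image_of_mem _ (Finset.mem_filter.2 ⟨hz, rfl⟩))
    (dyCube_subset_dyCube_dyAnc (stopLevel_spec (hD z hz)).1 z hx)

lemma sum_card_filter_dyAnc_stopCover_le (S : Finset (Fin m → ℕ)) :
    ∑ k ∈ Finset.range (N + 1), ∑ w ∈ stopCover N Q D k, #{z ∈ S | dyAnc (N - k) z = w}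
      ≤ #S :=
  calc _ ≤ ∑ k ∈ Finset.range (N + 1), #{z ∈ S | stopLevel N Q z = k} := by
        refine Finset.sum_le_sum fun k _ => ?_
        rw [Finset.sum_card_fiberwise_eq_card_filter]
        refine Finset.card_le_card fun z hz => ?_
        rw [Finset.mem_filter] at hz ⊢
        obtain ⟨z₀, hz₀, hanc⟩ := Finset.mem_image.1 hz.2
        rw [Finset.mem_filter] at hz₀
        exact ⟨hz.1, stopLevel_eq_of_dyAnc_eq (hD z₀ hz₀.1) hz₀.2 hanc.symm⟩
    _ = #{z ∈ S | stopLevel N Q z ∈ Finset.range (N + 1)} :=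
        Finset.sum_card_fiberwise_eq_card_filter _ _ _
    _ ≤ #S := Finset.card_filter_le _ _

end StopLevel

lemma dyContent_le_of_saturated {s δ : ℝ} {X : Set (Fin m → ℝ)} {N : ℕ}
    {D S : Finset (Fin m → ℕ)} (hδ : δ ≤ 2⁻¹ ^ N) (hX : X ⊆ ⋃ z ∈ D, dyCube m N z)
    (hsat : ∀ z ∈ D, ∃ k ≤ N,
      ((2 : ℝ) ^ (N - k)) ^ s ≤ 2 * #{z' ∈ S | dyAnc (N - k) z' = dyAnc (N - k) z}) :
    dyContent m s δ X ≤ ENNReal.ofReal (2 * ((2 : ℝ)⁻¹ ^ N) ^ s * #S) := by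
  set Q : ℕ → (Fin m → ℕ) → Prop :=
    fun k w => ((2 : ℝ) ^ (N - k)) ^ s ≤ 2 * #{z' ∈ S | dyAnc (N - k) z' = w}
  refine (dyContent_le_of_cover (stopCover N Q D) hδ (fun k => stopCover_eq_empty hsat)
    (hX.trans (iUnion_dyCube_subset_stopCover hsat))).trans (ENNReal.ofReal_le_ofReal ?_)
  calc ∑ k ∈ Finset.range (N + 1), #(stopCover N Q D k) * ((2 : ℝ)⁻¹ ^ k) ^ s
      ≤ ∑ k ∈ Finset.range (N + 1), ∑ w ∈ stopCover N Q D k,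
          2 * ((2 : ℝ)⁻¹ ^ N) ^ s * #{z ∈ S | dyAnc (N - k) z = w} := by
        refine Finset.sum_le_sum fun k hk => ?_
        rw [← nsmul_eq_mul, ← Finset.sum_const]
        refine Finset.sum_le_sum fun w hw => ?_
        rw [← two_pow_sub_mul_inv_two_pow (Finset.mem_range_succ_iff.1 hk),
          Real.mul_rpow (by positivity) (by positivity)]
        have := of_mem_stopCover hsat hw
        nlinarith [Real.rpow_nonneg (pow_nonneg (inv_nonneg.2 (zero_le_two (α := ℝ))) N) s]
    _ = 2 * ((2 : ℝ)⁻¹ ^ N) ^ s * ∑ k ∈ Finset.range (N + 1), ∑ w ∈ stopCover N Q D k,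
          (#{z ∈ S | dyAnc (N - k) z = w} : ℝ) := by
        simp_rw [Finset.mul_sum]
    _ ≤ 2 * ((2 : ℝ)⁻¹ ^ N) ^ s * #S := by
        gcongr
        exact_mod_cast sum_card_filter_dyAnc_stopCover_le hsat S

lemma card_le_pow_of_forall_le_add (W : Finset (Fin m → ℕ)) (d : ℕ)
    (hW : ∀ w ∈ W, ∀ w' ∈ W, ∀ i, w i ≤ w' i + d) : #W ≤ (d + 1) ^ m := by
  rcases W.eq_empty_or_nonempty with rfl | hne
  · simp
  set a : Fin m → ℕ := fun i => W.inf' hne (· i)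
  calc #W ≤ #(Fintype.piFinset fun i => Finset.Icc (a i) (a i + d)) := by
        refine Finset.card_le_card fun w hw => Fintype.mem_piFinset.2 fun i =>
          Finset.mem_Icc.2 ⟨Finset.inf'_le _ hw, ?_⟩
        obtain ⟨w', hw', hw'i⟩ := Finset.exists_mem_eq_inf' hne (· i)
        rw [show a i = w' i from hw'i]
        exact hW w hw w' hw' i
    _ = (d + 1) ^ m := by simp [add_assoc]

lemma exists_subset_forall_mod_two_eq (S : Finset (Fin m → ℕ)) :
    ∃ S' ⊆ S, (∀ z ∈ S', ∀ z' ∈ S', ∀ i, z i % 2 = z' i % 2) ∧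
      #S ≤ 2 ^ m * #S' := by
  obtain ⟨ε, -, hε⟩ := Finset.exists_le_card_fiber_of_nsmul_le_card_of_maps_to
    (s := S) (f := fun (z : Fin m → ℕ) (i : Fin m) => (z i : ZMod 2)) (t := Finset.univ)
    (b := (#S : ℝ) / 2 ^ m) (fun _ _ => Finset.mem_univ _) Finset.univ_nonempty
    (by simp; rw [mul_div_cancel₀ _ (by positivity)])
  refine ⟨{z ∈ S | (fun i => (z i : ZMod 2)) = ε}, Finset.filter_subset _ _,
    fun z hz z' hz' i => ?_, ?_⟩
  · rw [← ZMod.natCast_eq_natCast_iff', congrFun (Finset.mem_filter.1 hz).2 i,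
      congrFun (Finset.mem_filter.1 hz').2 i]
  · rw [div_le_iff₀ (by positivity)] at hε
    exact_mod_cast hε.trans_eq (mul_comm _ _)

lemma inv_two_pow_lt_dist_of_mod_two_eq {N : ℕ} {z z' : Fin m → ℕ} {x y : Fin m → ℝ}
    (hx : x ∈ dyCube m N z) (hy : y ∈ dyCube m N z') (hne : z ≠ z')
    (hpar : ∀ i, z i % 2 = z' i % 2) : 2⁻¹ ^ N < dist x y := by
  obtain ⟨i, hi⟩ := Function.ne_iff.1 hne
  have hgap : z' i + 2 ≤ z i ∨ z i + 2 ≤ z' i := by have := hpar i; omega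
  rw [inv_pow, inv_lt_iff_one_lt_mul₀ (by positivity), mul_comm]
  rcases hgap with h | h
  · have := natCast_sub_sub_one_lt_of_mem_dyCube hx hy i
    have : (z' i : ℝ) + 2 ≤ z i := by exact_mod_cast h
    linarith
  · have hlt := natCast_sub_sub_one_lt_of_mem_dyCube hy hx i
    have : (z i : ℝ) + 2 ≤ z' i := by exact_mod_cast h
    rw [dist_comm] at hlt
    linarith

lemma card_image_dyAnc_le {N k : ℕ} (hk : k ≤ N) {r : ℝ} (hr : r ≤ 2⁻¹ ^ k)
    {x : Fin m → ℝ} {F : Finset (Fin m → ℕ)} {p : (Fin m → ℕ) → Fin m → ℝ}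
    (hp : ∀ z ∈ F, p z ∈ dyCube m N z ∩ closedBall x r) :
    #(F.image (dyAnc (N - k))) ≤ 3 ^ m := by
  refine card_le_pow_of_forall_le_add _ 2 ?_
  simp only [Finset.mem_image]
  rintro _ ⟨z, hz, rfl⟩ _ ⟨z', hz', rfl⟩ i
  have hdist : 2 ^ k * dist (p z) (p z') ≤ 2 := by
    have h2k : (2 : ℝ) ^ k * 2⁻¹ ^ k = 1 := by rw [← mul_pow]; norm_num
    have := dist_triangle_right (p z) (p z') x
    have := mem_closedBall.1 (hp z hz).2
    have := mem_closedBall.1 (hp z' hz').2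
    nlinarith [pow_pos (two_pos (α := ℝ)) k]
  have := natCast_sub_sub_one_lt_of_mem_dyCube (dyCube_subset_dyCube_dyAnc hk z (hp z hz).1)
    (dyCube_subset_dyCube_dyAnc hk z' (hp z' hz').1) i
  have : (dyAnc (N - k) z i : ℝ) < dyAnc (N - k) z' i + 3 := by linarith
  exact Nat.le_of_lt_succ (by exact_mod_cast this)

lemma IsDyadicFrostman.ncard_image_inter_closedBall_le {N k : ℕ} {s r : ℝ}
    {S : Finset (Fin m → ℕ)} (hS : IsDyadicFrostman N s S)
    {p : (Fin m → ℕ) → Fin m → ℝ} (hp : ∀ z ∈ S, p z ∈ dyCube m N z) (hk : k ≤ N)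
    (hr : r ≤ 2⁻¹ ^ k) (x : Fin m → ℝ) :
    ((S.image p : Set (Fin m → ℝ)) ∩ closedBall x r).ncard ≤
      3 ^ m * ((2 : ℝ) ^ (N - k)) ^ s := by
  classical
  set F := {z ∈ S | p z ∈ closedBall x r}
  have hF : ∀ z ∈ F, p z ∈ dyCube m N z ∩ closedBall x r := fun z hz =>
    ⟨hp z (Finset.mem_filter.1 hz).1, (Finset.mem_filter.1 hz).2⟩
  have hball : (S.image p : Set (Fin m → ℝ)) ∩ closedBall x r = ↑(F.image p) := by
    rw [Finset.coe_image, Finset.coe_image, Finset.coe_filter, ← Set.image_inter_preimage]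
    rfl
  calc (((S.image p : Set (Fin m → ℝ)) ∩ closedBall x r).ncard : ℝ) ≤ #F := by
        rw [hball, Set.ncard_coe_finset]
        exact_mod_cast Finset.card_image_le
    _ = ∑ w ∈ F.image (dyAnc (N - k)), (#{z ∈ F | dyAnc (N - k) z = w} : ℝ) := by
        exact_mod_cast Finset.card_eq_sum_card_image _ _
    _ ≤ #(F.image (dyAnc (N - k))) • ((2 : ℝ) ^ (N - k)) ^ s :=
        Finset.sum_le_card_nsmul _ _ _ fun w _ => le_trans (by
          exact_mod_cast Finset.card_le_card (Finset.filter_subset_filter _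
            (Finset.filter_subset _ _))) (hS k hk w)
    _ ≤ 3 ^ m * ((2 : ℝ) ^ (N - k)) ^ s := by
        rw [nsmul_eq_mul]
        gcongr
        exact_mod_cast card_image_dyAnc_le hk hr hF

lemma isDeltaSet_image {N : ℕ} {s δ : ℝ} (hs : 0 ≤ s) (hδ : 0 < δ)
    (hδN : δ ≤ 2⁻¹ ^ N) (hNδ : 2⁻¹ ^ N < 2 * δ) {S : Finset (Fin m → ℕ)}
    (hS : IsDyadicFrostman N s S)
    (hpar : ∀ z ∈ S, ∀ z' ∈ S, ∀ i, z i % 2 = z' i % 2)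
    {p : (Fin m → ℕ) → Fin m → ℝ} (hp : ∀ z ∈ S, p z ∈ dyCube m N z) :
    IsDeltaSet δ s (3 ^ m * 2 ^ s) (S.image p) := by
  refine ⟨?_, fun x r hδr hr1 => ?_⟩
  · simp only [Finset.mem_image]
    rintro _ ⟨z, hz, rfl⟩ _ ⟨z', hz', rfl⟩ hne
    exact hδN.trans (inv_two_pow_lt_dist_of_mod_two_eq (hp z hz) (hp z' hz')
      (fun h => hne (congrArg p h)) (hpar z hz z' hz')).le
  obtain ⟨k, hrk, hkr⟩ := exists_le_inv_two_pow_lt (hδ.trans_le hδr) hr1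
  have hkN : k ≤ N := by
    by_contra! h
    have := pow_le_pow_of_le_one (by norm_num) (by norm_num) h (a := (2 : ℝ)⁻¹)
    rw [pow_succ] at this
    linarith
  have hT : ((2 : ℝ) ^ (N - k)) ^ s ≤ 2 ^ s * (r / δ) ^ s := by
    rw [← Real.mul_rpow (by norm_num) (div_nonneg (hδ.le.trans hδr) hδ.le)]
    refine Real.rpow_le_rpow (by positivity) ?_ hs
    rw [mul_div_assoc', le_div_iff₀ hδ]
    calc (2 : ℝ) ^ (N - k) * δ ≤ 2 ^ (N - k) * 2⁻¹ ^ N := by gcongr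
      _ = 2⁻¹ ^ k := two_pow_sub_mul_inv_two_pow hkN
      _ ≤ 2 * r := hkr.le
  calc _ ≤ 3 ^ m * ((2 : ℝ) ^ (N - k)) ^ s := hS.ncard_image_inter_closedBall_le hp hkN hrk x
    _ ≤ 3 ^ m * (2 ^ s * (r / δ) ^ s) := by gcongr
    _ = 3 ^ m * 2 ^ s * (r / δ) ^ s := by ring

end

/-- if `X ⊆ [0,1]^m` has `H^s_{δ,∞}(X) = κ > 0`, then `X`
contains a `(δ,s)`-subset `P` with `#P ≳ κ δ^{-s}`. -/
theorem delta_set_inside_content (m : ℕ) (s : ℝ) (hs : 0 < s) :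
    ∃ C > (0:ℝ), ∃ c > (0:ℝ),
      ∀ (δ : ℝ), 0 < δ → ∀ (κ : ℝ), 0 < κ →
        ∀ X : Set (Fin m → ℝ), X ⊆ {x | ∀ i, x i ∈ Icc (0:ℝ) 1} →
          dyContent m s δ X = ENNReal.ofReal κ →
            ∃ P : Finset (Fin m → ℝ), (P : Set (Fin m → ℝ)) ⊆ X ∧
              IsDeltaSet δ s C P ∧ c * (κ * δ ^ (-s)) ≤ (P.card : ℝ) := by
  refine ⟨3 ^ m * 2 ^ s, by positivity, (2 * 2 ^ s * 2 ^ m)⁻¹, by positivity, ?_⟩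
  intro δ hδ κ hκ X hX hcont
  have hδ1 : δ ≤ 1 := le_one_of_dyContent_ne_zero_ne_top
    (hcont ▸ (ENNReal.ofReal_pos.2 hκ).ne') (hcont ▸ ENNReal.ofReal_ne_top)
  obtain ⟨N, hδN, hNδ⟩ := exists_le_inv_two_pow_lt hδ hδ1
  obtain ⟨D, p, hp, hXD⟩ := exists_dyCube_cover hX N
  obtain ⟨S, hSD, hS, hsat⟩ := exists_isDyadicFrostman_saturated D N hs.le
  obtain ⟨S', hS'S, hpar, hS'⟩ := exists_subset_forall_mod_two_eq S
  have hpS' : ∀ z ∈ S', p z ∈ X ∩ dyCube m N z := fun z hz => hp z (hSD (hS'S hz))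
  have hκS : κ ≤ 2 * ((2 : ℝ)⁻¹ ^ N) ^ s * S.card := by
    have := dyContent_le_of_saturated hδN hXD hsat
    rwa [hcont, ENNReal.ofReal_le_ofReal_iff (by positivity)] at this
  refine ⟨S'.image p, ?_, isDeltaSet_image hs.le hδ hδN hNδ (hS.mono hS'S) hpar
    fun z hz => (hpS' z hz).2, ?_⟩
  · rw [Finset.coe_image, Set.image_subset_iff]
    exact fun z hz => (hpS' z hz).1
  rw [Finset.card_image_of_injOn fun z hz z' hz' (h : p z = p z') =>
    eq_of_mem_dyCube (hpS' z hz).2 (h ▸ (hpS' z' hz').2)]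
  have hscale : ((2 : ℝ)⁻¹ ^ N) ^ s ≤ 2 ^ s * δ ^ s := by
    rw [← Real.mul_rpow zero_le_two hδ.le]
    exact Real.rpow_le_rpow (by positivity) hNδ.le hs.le
  have hcard : (S.card : ℝ) ≤ 2 ^ m * S'.card := by exact_mod_cast hS'
  rw [Real.rpow_neg hδ.le, ← div_eq_inv_mul, ← div_eq_mul_inv, div_div,
    div_le_iff₀ (by positivity)]
  calc κ ≤ 2 * (2 ^ s * δ ^ s) * (2 ^ m * S'.card) := hκS.trans (by gcongr)
    _ = _ := by ring
end
end
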